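/- (Terminating Kummer identity.) Let n be a natural number and a ∈ ℂ such that (1+a+n)_k ≠ 0 for all 0 ≤ k ≤ n and (1+a/2)_n ≠ 0. Then ∑_{k=0}^{n} ((a)_k · (−n)_k)/((1+a+n)_k · k!) · (−1)^k = (1+a)_n/(1+a/2)_n. -/
import Mathlib

/-- Pochhammer symbol (shifted factorial) of a complex number. -/
noncomputable def poch (a : ℂ) (k : ℕ) : ℂ := ∏ j ∈ Finset.range k, (a + j)

lemma poch_zero (a : ℂ) : poch a 0 = 1 := by simp [poch]

lemma poch_succ (a : ℂ) (k : ℕ) : poch a (k+1) = poch a k * (a + k) := by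
  simp [poch, Finset.prod_range_succ]

lemma poch_succ' (a : ℂ) (k : ℕ) : poch a (k+1) = a * poch (a+1) k := by
  rw [poch, Finset.prod_range_succ', poch]
  simp only [Nat.cast_add, Nat.cast_one, Nat.cast_zero, add_zero]
  rw [mul_comm]
  congr 1
  exact Finset.prod_congr rfl (fun j _ => by ring)

lemma poch_add (a : ℂ) (m k : ℕ) : poch a (m+k) = poch a m * poch (a+m) k := by
  rw [poch, Finset.prod_range_add, poch, poch]
  congr 1
  exact Finset.prod_congr rfl (fun j _ => by push_cast; ring)

noncomputable def S (n : ℕ) (a : ℂ) : ℂ :=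
  ∑ k ∈ Finset.range (n+1), (n.choose k : ℂ) * poch a k * poch (a + n + k + 1) (n - k)

lemma S_rec (n : ℕ) (a : ℂ) : S (n+1) a = 2*(a+1) * S n (a+2) := by
  set G : ℕ → ℂ := fun k =>
    match k with
    | 0 => 0
    | (j+1) => (n.choose j : ℂ) * (a - n + j) * poch (a+1) j * poch (a + n + j + 3) (n - j)
    with hG
  have hG0 : G 0 = 0 := rfl
  have hGs : ∀ j : ℕ, G (j+1)
      = (n.choose j : ℂ) * (a - n + j) * poch (a+1) j * poch (a + n + j + 3) (n - j) :=
    fun j => rfl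
  have key : ∀ k ∈ Finset.range (n+2),
      (((n+1).choose k : ℂ) * poch a k * poch (a + (n+1:ℕ) + k + 1) ((n+1) - k)
        - 2*(a+1) * ((n.choose k : ℂ) * poch ((a+2)) k * poch ((a+2) + n + k + 1) (n - k)))
      = G k - G (k+1) := by
    intro k hk
    rw [Finset.mem_range] at hk
    match k with
    | 0 =>
        rw [hG0, hGs]
        push_cast
        simp only [poch_zero, Nat.sub_zero]
        rw [show a + ((n:ℂ)+1) + 0 + 1 = a + n + 2 from by ring,
            show a + 2 + (n:ℂ) + 0 + 1 = a + n + 3 from by ring,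
            show a + (n:ℂ) + 0 + 3 = a + n + 3 from by ring,
            poch_succ' (a + n + 2) n,
            show a + (n:ℂ) + 2 + 1 = a + n + 3 from by ring]
        simp only [Nat.choose_zero_right, Nat.cast_one]
        ring
    | (j+1) =>
        have hj : j ≤ n := by omega
        by_cases hjn : j = n
        · subst hjn
          simp only [hGs]
          simp only [Nat.choose_self, Nat.choose_succ_self, Nat.cast_one, Nat.cast_zero,
            Nat.sub_self, poch_zero, zero_mul, mul_zero, one_mul, sub_zero]
          rw [poch_succ' a j]
          ring
        · have hjn' : j + 1 ≤ n := by omega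
          simp only [hGs]
          have e1 : poch a (j+1) = a * poch (a+1) j := poch_succ' a j
          have hrr : (a+1) * poch (a+2) (j+1)
              = poch (a+1) j * (a+(j:ℂ)+1) * (a+(j:ℂ)+2) := by
            rw [show (a:ℂ)+2 = a+1+1 from by ring, ← poch_succ' (a+1) (j+1),
              poch_succ, poch_succ]
            push_cast; ring
          have hcb : ((n.choose (j+1) : ℂ)) * ((j:ℂ)+1) = (n.choose j : ℂ) * ((n:ℂ) - j) := by
            have h2 := congrArg (fun m : ℕ => (m:ℂ)) (Nat.choose_succ_right_eq n j)
            push_cast [Nat.cast_sub hj] at h2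
            exact h2
          have E3 : poch (a + (n:ℂ) + (j:ℂ) + 3) (n-j)
              = (a + (n:ℂ) + (j:ℂ) + 3) * poch (a + (n:ℂ) + (j:ℂ) + 4) (n-j-1) := by
            rw [show n-j = (n-j-1)+1 from by omega, poch_succ' (a + (n:ℂ) + (j:ℂ) + 3)]
            congr 2
            ring
          have E4 : poch (a + 2 + (n:ℂ) + ((j:ℂ) + 1) + 1) (n-(j+1))
              = poch (a + (n:ℂ) + (j:ℂ) + 4) (n-j-1) := by
            congr 1
            ring
          have E5 : poch (a + (n:ℂ) + ((j:ℂ) + 1) + 3) (n-(j+1))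
              = poch (a + (n:ℂ) + (j:ℂ) + 4) (n-j-1) := by
            congr 1
            ring
          have E6 : poch (a+1) (j+1) = poch (a+1) j * (a+1+(j:ℂ)) := poch_succ (a+1) j
          have E2 : poch (a + ((n:ℂ) + 1) + ((j:ℂ) + 1) + 1) (n-j)
              = (a + (n:ℂ) + (j:ℂ) + 3) * poch (a + (n:ℂ) + (j:ℂ) + 4) (n-j-1) := by
            rw [show a + ((n:ℂ) + 1) + ((j:ℂ) + 1) + 1 = a + (n:ℂ) + (j:ℂ) + 3 from by ring]
            exact E3
          push_cast [Nat.choose_succ_succ n j]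
          rw [e1, E3, E4, E5, E6, E2]
          linear_combination (-2)*((n.choose (j+1):ℂ))*(poch (a + (n:ℂ) + (j:ℂ) + 4) (n-j-1))*hrr
            - ((a+(n:ℂ)+(j:ℂ)+3) * poch (a+1) j * poch (a + (n:ℂ) + (j:ℂ) + 4) (n-j-1)) * hcb
  have tele : ∑ k ∈ Finset.range (n+2), (G k - G (k+1)) = G 0 - G (n+2) :=
    Finset.sum_range_sub' G (n+2)
  have hGtop : G (n+2) = 0 := by
    rw [hGs]; simp [Nat.choose_succ_self]
  have hsum : ∑ k ∈ Finset.range (n+2),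
      (((n+1).choose k : ℂ) * poch a k * poch (a + (n+1:ℕ) + k + 1) ((n+1) - k)
        - 2*(a+1) * ((n.choose k : ℂ) * poch ((a+2)) k * poch ((a+2) + n + k + 1) (n - k)))
      = 0 := by
    rw [Finset.sum_congr rfl key, tele, hG0, hGtop, sub_zero]
  rw [Finset.sum_sub_distrib] at hsum
  have hS1 : S (n+1) a
      = ∑ k ∈ Finset.range (n+2), ((n+1).choose k : ℂ) * poch a k
          * poch (a + (n+1:ℕ) + k + 1) ((n+1) - k) := rfl
  have hS2 : 2*(a+1) * S n (a+2)
      = ∑ k ∈ Finset.range (n+2),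
          2*(a+1) * ((n.choose k : ℂ) * poch ((a+2)) k * poch ((a+2) + n + k + 1) (n - k)) := by
    rw [S, Finset.mul_sum, Finset.sum_range_succ (n := n+1)]
    simp [Nat.choose_succ_self]
  rw [hS1, hS2]
  exact sub_eq_zero.mp hsum

lemma S_eq : ∀ (n : ℕ) (a : ℂ), S n a = 2^n * ∏ j ∈ Finset.range n, (a + 2*j + 1)
  | 0, a => by simp [S, poch_zero]
  | (n+1), a => by
      rw [S_rec, S_eq n (a+2), Finset.prod_range_succ']
      have hcong : ∀ j ∈ Finset.range n, (a + 2*((j:ℕ)+1 : ℕ) + 1 : ℂ) = ((a+2) + 2*j + 1) := by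
        intro j _; push_cast; ring
      rw [Finset.prod_congr rfl hcong]
      push_cast
      ring

lemma poch_double (a : ℂ) : ∀ n : ℕ,
    poch (1+a) (n+n) = ∏ j ∈ Finset.range n, ((a + 2*j + 1) * (a + 2*j + 2))
  | 0 => by simp [poch_zero]
  | (n+1) => by
      rw [show (n+1)+(n+1) = ((n+n)+1)+1 from by omega, poch_succ, poch_succ,
        poch_double a n, Finset.prod_range_succ]
      push_cast
      ring

lemma two_pow_poch (a : ℂ) (n : ℕ) :
    2^n * poch (1+a/2) n = ∏ j ∈ Finset.range n, (a + 2*j + 2) := by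
  rw [poch, show (2:ℂ)^n = ∏ _j ∈ Finset.range n, (2:ℂ) by
      rw [Finset.prod_const, Finset.card_range], ← Finset.prod_mul_distrib]
  exact Finset.prod_congr rfl (fun j _ => by ring)

lemma desc_prod (n : ℕ) : ∀ k : ℕ, k ≤ n →
    (∏ j ∈ Finset.range k, ((n:ℂ) - j)) = (n.descFactorial k : ℂ)
  | 0, _ => by simp
  | (k+1), hk => by
      rw [Finset.prod_range_succ, desc_prod n k (by omega), Nat.descFactorial_succ]
      push_cast [Nat.cast_sub (show k ≤ n by omega)]
      ring

lemma poch_neg (n k : ℕ) (hk : k ≤ n) :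
    poch (-(n:ℂ)) k = (-1)^k * (k.factorial : ℂ) * (n.choose k : ℂ) := by
  have h1 : poch (-(n:ℂ)) k = ∏ j ∈ Finset.range k, ((-1) * ((n:ℂ) - j)) := by
    rw [poch]; exact Finset.prod_congr rfl (fun j _ => by ring)
  rw [h1, Finset.prod_mul_distrib, Finset.prod_const, Finset.card_range, desc_prod n k hk,
    Nat.descFactorial_eq_factorial_mul_choose]
  push_cast
  ring

/-- Terminating Kummer identity. -/
theorem kummer_terminating (n : ℕ) (a : ℂ)
    (h : ∀ k ≤ n, poch (1 + a + (n : ℂ)) k ≠ 0)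
    (hn : poch (1 + a / 2) n ≠ 0) :
    ∑ k ∈ Finset.range (n + 1),
        poch a k * poch (-(n : ℂ)) k /
          (poch (1 + a + (n : ℂ)) k * (k.factorial : ℂ)) * (-1 : ℂ) ^ k
      = poch (1 + a) n / poch (1 + a / 2) n := by
  have hpn : poch (1 + a + (n:ℂ)) n ≠ 0 := h n le_rfl
  have step1 : ∀ k ∈ Finset.range (n+1),
      poch a k * poch (-(n : ℂ)) k /
          (poch (1 + a + (n : ℂ)) k * (k.factorial : ℂ)) * (-1 : ℂ) ^ k
      = (n.choose k : ℂ) * poch a k * poch (a + (n:ℂ) + k + 1) (n - k)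
          / poch (1 + a + (n:ℂ)) n := by
    intro k hk
    rw [Finset.mem_range] at hk
    have hk' : k ≤ n := by omega
    have hks : poch (1 + a + (n:ℂ)) k ≠ 0 := h k hk'
    have hsplit : poch (1 + a + (n:ℂ)) n
        = poch (1 + a + (n:ℂ)) k * poch (1 + a + (n:ℂ) + k) (n - k) := by
      rw [← poch_add]
      congr 1
      omega
    have htail : poch (1 + a + (n:ℂ) + k) (n - k) ≠ 0 := by
      intro z
      exact hpn (by rw [hsplit, z, mul_zero])
    have hfac : ((k.factorial : ℂ)) ≠ 0 := by
      exact_mod_cast (Nat.factorial_pos k).ne'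
    rw [poch_neg n k hk',
      show a + (n:ℂ) + k + 1 = 1 + a + (n:ℂ) + k from by ring, hsplit]
    field_simp
    ring_nf
    rw [show ((-1:ℂ))^(k*2) = 1 from by
      rw [mul_comm, pow_mul, neg_one_sq, one_pow], mul_one]
  rw [Finset.sum_congr rfl step1, ← Finset.sum_div]
  have : ∑ k ∈ Finset.range (n+1),
      (n.choose k : ℂ) * poch a k * poch (a + (n:ℂ) + k + 1) (n - k) = S n a := rfl
  rw [this, S_eq, div_eq_div_iff hpn hn]
  calc (2:ℂ)^n * (∏ j ∈ Finset.range n, (a + 2*j + 1)) * poch (1 + a/2) n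
      = (∏ j ∈ Finset.range n, (a + 2*j + 1)) * ((2:ℂ)^n * poch (1 + a/2) n) := by ring
    _ = (∏ j ∈ Finset.range n, (a + 2*j + 1)) * ∏ j ∈ Finset.range n, (a + 2*j + 2) := by
        rw [two_pow_poch]
    _ = ∏ j ∈ Finset.range n, ((a + 2*j + 1) * (a + 2*j + 2)) := Finset.prod_mul_distrib.symm
    _ = poch (1+a) (n+n) := (poch_double a n).symm
    _ = poch (1+a) n * poch (1 + a + (n:ℂ)) n := by rw [poch_add]
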